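/- arXiv:2602.06461 — 4 statements merged into one kernel-verified Lean document; each statement's English description precedes it below -/
import Mathlib

section
/- Assume the abstract setting described in the context. Let μ > 0 satisfy 2·M·c·μ^{ρ−1}·B < 1. Suppose g_u, g_v : (0,∞) → V are continuous and u, v : (0,∞) → V are mild solutions with forcings g_u and g_v respectively on (0,∞), with sup_{t>0} t^{αε}‖u(t)‖_V ≤ μ and sup_{t>0} t^{αε}‖v(t)‖_V ≤ μ. Then lim_{t→∞} t^{αε}‖g_u(t) − g_v(t)‖_V = 0 if and only if lim_{t→∞} t^{αε}‖u(t) − v(t)‖_V = 0. -/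
open MeasureTheory Set Filter Topology intervalIntegral

/-! Write `φ t = t^{αε}‖u t - v t‖`, `ψ t = t^{αε}‖g_u t - g_v t‖`, `a = α(ρ-1)ε`, `b = αρε`.
Subtracting the two Duhamel formulas, bounding `f (u s) - f (v s)` by the local Lipschitz
estimate and `R (t - s)` by the smoothing estimate, and substituting `s = σ t` gives
`|φ t - ψ t| ≤ C ∫₀¹ (1-σ)^{a-1} σ^{-b} φ(σt) dσ` with `C = 2Mcμ^{ρ-1}`; the powers of `t`
cancel exactly because `a + αε = b`.
If `φ → 0`, dominated convergence sends the right-hand side to `0`, hence `ψ → 0`.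
If `ψ → 0`, splitting `φ ≤ r + (φ - r)⁺` for `r > limsup φ` yields `limsup φ ≤ C B r`,
and `C B < 1` forces `limsup φ = 0`. -/

/-- `u` is a mild solution with forcing `g` on the set `S ⊆ (0,∞)`: `u` is continuous on `S`
and for every `t ∈ S` the Bochner integral `∫₀^t R(t-s) f(u(s)) ds` converges and
`u t = g t + ∫₀^t R(t-s) f(u(s)) ds`. -/
def IsMildSolutionOn {V W : Type*} [NormedAddCommGroup V] [NormedSpace ℝ V]
    [NormedAddCommGroup W] [NormedSpace ℝ W]
    (R : ℝ → W →L[ℝ] V) (f : V → W) (g u : ℝ → V) (S : Set ℝ) : Prop :=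
  ContinuousOn u S ∧ ∀ t ∈ S,
    IntervalIntegrable (fun s => R (t - s) (f (u s))) volume 0 t ∧
    u t = g t + ∫ s in (0:ℝ)..t, R (t - s) (f (u s))

section RescaledKernel

variable {K φ : ℝ → ℝ} {C : ℝ}

theorem ContinuousOn.aestronglyMeasurable_comp_mul (hφ : ContinuousOn φ (Ioi 0)) {t : ℝ}
    (ht : 0 < t) : AEStronglyMeasurable (fun σ => φ (σ * t)) (volume.restrict (Ioc 0 1)) :=
  (hφ.comp (continuousOn_id.mul continuousOn_const) fun _ hσ => mul_pos hσ.1 ht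
    ).aestronglyMeasurable measurableSet_Ioc

theorem IntervalIntegrable.mul_comp_mul (hK : IntervalIntegrable K volume 0 1)
    (hφ : ContinuousOn φ (Ioi 0)) (hφC : ∀ s > 0, |φ s| ≤ C) {t : ℝ} (ht : 0 < t) :
    IntervalIntegrable (fun σ => K σ * φ (σ * t)) volume 0 1 :=
  (intervalIntegrable_iff_integrableOn_Ioc_of_le zero_le_one).2 <|
    hK.1.mul_bdd (hφ.aestronglyMeasurable_comp_mul ht) <|
      (ae_restrict_iff' measurableSet_Ioc).2 <| ae_of_all _ fun _ hσ => hφC _ (mul_pos hσ.1 ht)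

theorem tendsto_integral_mul_comp_mul_atTop (hK : IntervalIntegrable K volume 0 1)
    (hφ : ContinuousOn φ (Ioi 0)) (hφC : ∀ s > 0, |φ s| ≤ C) {l : ℝ}
    (hlim : Tendsto φ atTop (𝓝 l)) :
    Tendsto (fun t => ∫ σ in (0:ℝ)..1, K σ * φ (σ * t)) atTop
      (𝓝 (∫ σ in (0:ℝ)..1, K σ * l)) := by
  refine tendsto_integral_filter_of_dominated_convergence (fun σ => ‖K σ‖ * C)
    ((eventually_gt_atTop 0).mono fun t ht =>
      (hK.mul_comp_mul hφ hφC ht).def'.aestronglyMeasurable)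
    ((eventually_gt_atTop 0).mono fun t ht => ae_of_all _ fun σ hσ => ?_)
    (hK.norm.mul_const C) (ae_of_all _ fun σ hσ => ?_)
  · rw [uIoc_of_le zero_le_one] at hσ
    rw [norm_mul]
    exact mul_le_mul_of_nonneg_left (hφC _ (mul_pos hσ.1 ht)) (norm_nonneg _)
  · rw [uIoc_of_le zero_le_one] at hσ
    exact (hlim.comp (tendsto_id.const_mul_atTop hσ.1)).const_mul (K σ)

theorem tendsto_zero_of_le_add_integral_comp_mul (hK : IntervalIntegrable K volume 0 1)
    (hK0 : ∀ σ ∈ Icc (0:ℝ) 1, 0 ≤ K σ) (hφ : ContinuousOn φ (Ioi 0))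
    (hφ0 : ∀ s > 0, 0 ≤ φ s) (hφC : ∀ s > 0, |φ s| ≤ C) {ψ : ℝ → ℝ}
    (hψ : Tendsto ψ atTop (𝓝 0)) {q : ℝ} (hq0 : 0 ≤ q)
    (hq : q * ∫ σ in (0:ℝ)..1, K σ < 1)
    (hle : ∀ t > 0, φ t ≤ ψ t + q * ∫ σ in (0:ℝ)..1, K σ * φ (σ * t)) :
    Tendsto φ atTop (𝓝 0) := by
  set B := ∫ σ in (0:ℝ)..1, K σ
  have hbelow : ∀ᶠ t in atTop, 0 ≤ φ t := (eventually_gt_atTop 0).mono hφ0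
  have hbdd : IsBoundedUnder (· ≤ ·) atTop φ :=
    isBoundedUnder_of_eventually_le <|
      (eventually_gt_atTop 0).mono fun s hs => (le_abs_self _).trans (hφC s hs)
  set L := limsup φ atTop
  have hL : ∀ r > L, L ≤ q * B * r := by
    intro r hr
    set χ := fun s => max (φ s - r) 0
    have hχC : ∀ s > 0, |χ s| ≤ C + |r| := fun s hs => by
      rw [abs_of_nonneg (le_max_right _ _)]
      exact max_le (by linarith [le_abs_self (φ s), hφC s hs, neg_abs_le r])
        (by linarith [abs_nonneg (φ s), hφC s hs, abs_nonneg r])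
    have hχcont : ContinuousOn χ (Ioi 0) := (hφ.sub continuousOn_const).sup continuousOn_const
    have hχ : Tendsto (fun t => ∫ σ in (0:ℝ)..1, K σ * χ (σ * t)) atTop (𝓝 0) := by
      have hχ0 : Tendsto χ atTop (𝓝 0) :=
        tendsto_const_nhds.congr' <| (eventually_lt_of_limsup_lt hr hbdd).mono fun s hs =>
          (max_eq_right (by linarith)).symm
      simpa using tendsto_integral_mul_comp_mul_atTop hK hχcont hχC hχ0
    have hupper : ∀ t > 0, φ t ≤ ψ t + q * (B * r + ∫ σ in (0:ℝ)..1, K σ * χ (σ * t)) := by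
      intro t ht
      have hKχ := hK.mul_comp_mul hχcont hχC ht
      have hsplit : ∫ σ in (0:ℝ)..1, K σ * φ (σ * t)
          ≤ B * r + ∫ σ in (0:ℝ)..1, K σ * χ (σ * t) :=
        calc ∫ σ in (0:ℝ)..1, K σ * φ (σ * t)
            ≤ ∫ σ in (0:ℝ)..1, K σ * r + K σ * χ (σ * t) := by
              refine integral_mono_on zero_le_one (hK.mul_comp_mul hφ hφC ht)
                ((hK.mul_const r).add hKχ) fun σ hσ => ?_
              rw [← mul_add]
              exact mul_le_mul_of_nonneg_left (by linarith [le_max_left (φ (σ * t) - r) 0])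
                (hK0 σ hσ)
          _ = B * r + ∫ σ in (0:ℝ)..1, K σ * χ (σ * t) := by
              rw [integral_add (hK.mul_const r) hKχ, intervalIntegral.integral_mul_const]
      nlinarith [hle t ht]
    calc L ≤ limsup (fun t => ψ t + q * (B * r + ∫ σ in (0:ℝ)..1, K σ * χ (σ * t))) atTop :=
          limsup_le_limsup ((eventually_gt_atTop 0).mono hupper)
            (isBoundedUnder_of_eventually_ge hbelow).isCoboundedUnder_le
            (hψ.add ((hχ.const_add _).const_mul q)).isBoundedUnder_le
      _ = q * B * r := by
        convert (hψ.add ((hχ.const_add (B * r)).const_mul q)).limsup_eq using 1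
        ring
  have hL0 : L ≤ 0 := by
    by_contra! hLpos
    have hB : 0 ≤ B := integral_nonneg zero_le_one hK0
    have h := hL (2 * L / (1 + q * B)) <| by
      rw [gt_iff_lt, lt_div_iff₀ (by positivity)]
      nlinarith
    rw [← mul_div_assoc, le_div_iff₀ (by positivity)] at h
    nlinarith
  exact tendsto_of_le_liminf_of_limsup_le (le_liminf_of_le hbdd.isCoboundedUnder_ge hbelow) hL0
    hbdd (isBoundedUnder_of_eventually_ge hbelow)

end RescaledKernel

section WeightedDistance

variable {V : Type*} [NormedAddCommGroup V] {u v : ℝ → V} {e μ : ℝ}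

theorem ContinuousOn.rpow_mul_norm_sub (hu : ContinuousOn u (Ioi 0))
    (hv : ContinuousOn v (Ioi 0)) (e : ℝ) :
    ContinuousOn (fun t => t ^ e * ‖u t - v t‖) (Ioi 0) :=
  (continuousOn_id.rpow_const fun _ ht => Or.inl (ne_of_gt ht)).mul (hu.sub hv).norm

theorem rpow_mul_norm_sub_le {t : ℝ} (ht : 0 ≤ t) (hu : t ^ e * ‖u t‖ ≤ μ)
    (hv : t ^ e * ‖v t‖ ≤ μ) : t ^ e * ‖u t - v t‖ ≤ 2 * μ := by
  have := mul_le_mul_of_nonneg_left (norm_sub_le (u t) (v t)) (Real.rpow_nonneg ht e)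
  linarith

end WeightedDistance

theorem norm_sub_le_of_norm_le {V W : Type*} [NormedAddCommGroup V] [NormedAddCommGroup W]
    {f : V → W} {ρ c : ℝ} (hρ : 1 ≤ ρ) (hc : 0 ≤ c)
    (hf : ∀ x y : V, ‖f x - f y‖ ≤ c * (‖x‖ ^ (ρ - 1) + ‖y‖ ^ (ρ - 1)) * ‖x - y‖)
    {x y : V} {r : ℝ} (hx : ‖x‖ ≤ r) (hy : ‖y‖ ≤ r) :
    ‖f x - f y‖ ≤ 2 * c * r ^ (ρ - 1) * ‖x - y‖ := by
  have hx' := Real.rpow_le_rpow (norm_nonneg x) hx (sub_nonneg.2 hρ)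
  have hy' := Real.rpow_le_rpow (norm_nonneg y) hy (sub_nonneg.2 hρ)
  refine (hf x y).trans (mul_le_mul_of_nonneg_right ?_ (norm_nonneg _))
  nlinarith

theorem sub_mul_rpow_mul_mul_rpow {t σ : ℝ} (ht : 0 < t) (hσ : σ ∈ Icc (0:ℝ) 1) (p q : ℝ) :
    (t - σ * t) ^ p * (σ * t) ^ q = t ^ (p + q) * ((1 - σ) ^ p * σ ^ q) := by
  rw [show t - σ * t = (1 - σ) * t by ring, Real.mul_rpow (by linarith [hσ.2]) ht.le,
    Real.mul_rpow hσ.1 ht.le, Real.rpow_add ht]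
  ring

section MildSolutions

variable {V W : Type*} [NormedAddCommGroup V] [NormedSpace ℝ V]
  [NormedAddCommGroup W] [NormedSpace ℝ W] {R : ℝ → W →L[ℝ] V} {f : V → W} {ρ c M μ e : ℝ}

theorem norm_apply_sub_le_of_rpow_mul_norm_le (hρ : 1 ≤ ρ) (hc : 0 ≤ c) (hM : 0 ≤ M)
    (hμ : 0 ≤ μ) {p b : ℝ} (hb : b = e * ρ)
    (hR : ∀ t > (0:ℝ), ∀ w : W, ‖R t w‖ ≤ M * t ^ p * ‖w‖)
    (hf : ∀ x y : V, ‖f x - f y‖ ≤ c * (‖x‖ ^ (ρ - 1) + ‖y‖ ^ (ρ - 1)) * ‖x - y‖)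
    {x y : V} {s τ : ℝ} (hs : 0 < s) (hτ : 0 < τ) (hx : s ^ e * ‖x‖ ≤ μ)
    (hy : s ^ e * ‖y‖ ≤ μ) :
    ‖R τ (f x - f y)‖ ≤ 2 * M * c * μ ^ (ρ - 1) * τ ^ p * s ^ (-b) * (s ^ e * ‖x - y‖) := by
  have hse : 0 < s ^ e := Real.rpow_pos_of_pos hs e
  have hnorm : ∀ z : V, s ^ e * ‖z‖ ≤ μ → ‖z‖ ≤ μ * s ^ (-e) := fun z hz => by
    rwa [Real.rpow_neg hs.le, ← div_eq_mul_inv, le_div_iff₀ hse, mul_comm]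
  have hpow : (μ * s ^ (-e)) ^ (ρ - 1) = μ ^ (ρ - 1) * (s ^ (-b) * s ^ e) := by
    rw [Real.mul_rpow hμ (Real.rpow_nonneg hs.le _), ← Real.rpow_mul hs.le, ← Real.rpow_add hs, hb]
    ring_nf
  calc ‖R τ (f x - f y)‖ ≤ M * τ ^ p * ‖f x - f y‖ := hR τ hτ _
    _ ≤ M * τ ^ p * (2 * c * (μ * s ^ (-e)) ^ (ρ - 1) * ‖x - y‖) :=
        mul_le_mul_of_nonneg_left (norm_sub_le_of_norm_le hρ hc hf (hnorm x hx) (hnorm y hy))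
          (by positivity)
    _ = _ := by rw [hpow]; ring

theorem rpow_mul_norm_sub_sub_le_integral {gu gv u v : ℝ → V} {a b : ℝ}
    (hρ : 1 ≤ ρ) (hc : 0 ≤ c) (hM : 0 ≤ M) (hμ : 0 ≤ μ) (ha : a = e * (ρ - 1)) (hb : b = e * ρ)
    (hR : ∀ t > (0:ℝ), ∀ w : W, ‖R t w‖ ≤ M * t ^ (a - 1) * ‖w‖)
    (hf : ∀ x y : V, ‖f x - f y‖ ≤ c * (‖x‖ ^ (ρ - 1) + ‖y‖ ^ (ρ - 1)) * ‖x - y‖)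
    (hK : IntervalIntegrable (fun σ => (1 - σ) ^ (a - 1) * σ ^ (-b)) volume 0 1)
    (hu : IsMildSolutionOn R f gu u (Ioi 0)) (hv : IsMildSolutionOn R f gv v (Ioi 0))
    (hubdd : ∀ t > (0:ℝ), t ^ e * ‖u t‖ ≤ μ) (hvbdd : ∀ t > (0:ℝ), t ^ e * ‖v t‖ ≤ μ)
    {t : ℝ} (ht : 0 < t) :
    t ^ e * ‖u t - v t - (gu t - gv t)‖ ≤ 2 * M * c * μ ^ (ρ - 1) *
      ∫ σ in (0:ℝ)..1, (1 - σ) ^ (a - 1) * σ ^ (-b) * ((σ * t) ^ e * ‖u (σ * t) - v (σ * t)‖) := by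
  set C := 2 * M * c * μ ^ (ρ - 1)
  set K := fun σ : ℝ => (1 - σ) ^ (a - 1) * σ ^ (-b)
  set φ := fun s => s ^ e * ‖u s - v s‖
  set F := fun s => R (t - s) (f (u s) - f (v s))
  obtain ⟨hiu, hequ⟩ := hu.2 t ht
  obtain ⟨hiv, heqv⟩ := hv.2 t ht
  have hdiff : u t - v t - (gu t - gv t) = t • ∫ σ in (0:ℝ)..1, F (σ * t) := by
    rw [integral_comp_mul_right F ht.ne', zero_mul, one_mul, smul_inv_smul₀ ht.ne']
    simp only [F, map_sub]
    rw [integral_sub hiu hiv, hequ, heqv]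
    abel
  have hφC : ∀ s > 0, |φ s| ≤ 2 * μ := fun s hs => by
    rw [abs_of_nonneg (by positivity)]
    exact rpow_mul_norm_sub_le hs.le (hubdd s hs) (hvbdd s hs)
  have hKφ : IntervalIntegrable (fun σ => K σ * φ (σ * t)) volume 0 1 :=
    hK.mul_comp_mul (hu.1.rpow_mul_norm_sub hv.1 e) hφC ht
  have hF : ∀ᵐ σ, σ ∈ Ioc (0:ℝ) 1 → ‖F (σ * t)‖ ≤ C * t ^ (a - 1 + -b) * (K σ * φ (σ * t)) := by
    filter_upwards [Measure.ae_ne volume 1] with σ hσ1 hσ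
    have hσt : 0 < σ * t := mul_pos hσ.1 ht
    have hτ : 0 < t - σ * t := by nlinarith [lt_of_le_of_ne hσ.2 hσ1]
    refine (norm_apply_sub_le_of_rpow_mul_norm_le hρ hc hM hμ hb hR hf hσt hτ
      (hubdd _ hσt) (hvbdd _ hσt)).trans_eq ?_
    rw [mul_assoc C, sub_mul_rpow_mul_mul_rpow ht (Ioc_subset_Icc_self hσ)]
    ring
  have hweight : t ^ e * t * t ^ (a - 1 + -b) = 1 := by
    rw [← Real.rpow_add_one ht.ne', ← Real.rpow_add ht, ha, hb]
    ring_nf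
    exact Real.rpow_zero t
  calc t ^ e * ‖u t - v t - (gu t - gv t)‖ = t ^ e * (t * ‖∫ σ in (0:ℝ)..1, F (σ * t)‖) := by
        rw [hdiff, norm_smul, Real.norm_of_nonneg ht.le]
    _ ≤ t ^ e * (t * ∫ σ in (0:ℝ)..1, C * t ^ (a - 1 + -b) * (K σ * φ (σ * t))) := by
        gcongr
        exact norm_integral_le_of_norm_le zero_le_one hF (hKφ.const_mul _)
    _ = t ^ e * t * t ^ (a - 1 + -b) * (C * ∫ σ in (0:ℝ)..1, K σ * φ (σ * t)) := by
        rw [intervalIntegral.integral_const_mul]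
        ring
    _ = C * ∫ σ in (0:ℝ)..1, K σ * φ (σ * t) := by rw [hweight, one_mul]

end MildSolutions

theorem asymptotic_stability_general
    {V W : Type*} [NormedAddCommGroup V] [NormedSpace ℝ V]
    [NormedAddCommGroup W] [NormedSpace ℝ W]
    (ρ α ε M c B : ℝ)
    (hρ : 1 < ρ)
    (hM : 0 < M) (hc : 0 < c)
    (R : ℝ → W →L[ℝ] V)
    (hRbound : ∀ t > (0:ℝ), ∀ w : W, ‖R t w‖ ≤ M * t ^ (α * (ρ - 1) * ε - 1) * ‖w‖)
    (f : V → W)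
    (hf : ∀ x y : V, ‖f x - f y‖ ≤ c * (‖x‖ ^ (ρ - 1) + ‖y‖ ^ (ρ - 1)) * ‖x - y‖)
    (hBint : IntervalIntegrable
      (fun s => (1 - s) ^ (α * (ρ - 1) * ε - 1) * s ^ (-(α * ρ * ε))) volume 0 1)
    (hB : B = ∫ s in (0:ℝ)..1, (1 - s) ^ (α * (ρ - 1) * ε - 1) * s ^ (-(α * ρ * ε)))
    (μ : ℝ) (hμ : 0 < μ) (hsmall : 2 * M * c * μ ^ (ρ - 1) * B < 1)
    (gu gv : ℝ → V)
    (u v : ℝ → V)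
    (hu : IsMildSolutionOn R f gu u (Ioi 0))
    (hv : IsMildSolutionOn R f gv v (Ioi 0))
    (hubdd : ∀ t > (0:ℝ), t ^ (α * ε) * ‖u t‖ ≤ μ)
    (hvbdd : ∀ t > (0:ℝ), t ^ (α * ε) * ‖v t‖ ≤ μ) :
    Tendsto (fun t => t ^ (α * ε) * ‖gu t - gv t‖) atTop (𝓝 0) ↔
      Tendsto (fun t => t ^ (α * ε) * ‖u t - v t‖) atTop (𝓝 0) := by
  set C := 2 * M * c * μ ^ (ρ - 1)
  set φ := fun t => t ^ (α * ε) * ‖u t - v t‖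
  set ψ := fun t => t ^ (α * ε) * ‖gu t - gv t‖
  have hφ : ContinuousOn φ (Ioi 0) := hu.1.rpow_mul_norm_sub hv.1 _
  have hφ0 : ∀ t > 0, 0 ≤ φ t := fun t ht => by positivity
  have hφC : ∀ t > 0, |φ t| ≤ 2 * μ := fun t ht => by
    rw [abs_of_nonneg (hφ0 t ht)]
    exact rpow_mul_norm_sub_le ht.le (hubdd t ht) (hvbdd t ht)
  have hclose : ∀ t > 0, |φ t - ψ t| ≤ C * ∫ σ in (0:ℝ)..1,
      (1 - σ) ^ (α * (ρ - 1) * ε - 1) * σ ^ (-(α * ρ * ε)) * φ (σ * t) := fun t ht =>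
    calc |φ t - ψ t| ≤ t ^ (α * ε) * ‖u t - v t - (gu t - gv t)‖ := by
          rw [← mul_sub, abs_mul, abs_of_nonneg (by positivity)]
          exact mul_le_mul_of_nonneg_left (abs_norm_sub_norm_le _ _) (by positivity)
      _ ≤ _ := rpow_mul_norm_sub_sub_le_integral hρ.le hc.le hM.le hμ.le (by ring) (by ring)
          hRbound hf hBint hu hv hubdd hvbdd ht
  constructor
  · intro hψ
    refine tendsto_zero_of_le_add_integral_comp_mul (q := C) hBint (fun σ hσ => ?_) hφ hφ0 hφC
      hψ (by positivity) (by rwa [hB] at hsmall) fun t ht => ?_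
    · exact mul_nonneg (Real.rpow_nonneg (sub_nonneg.2 hσ.2) _) (Real.rpow_nonneg hσ.1 _)
    · linarith [(abs_sub_le_iff.1 (hclose t ht)).1]
  · intro hφlim
    have hint := (tendsto_integral_mul_comp_mul_atTop hBint hφ hφC hφlim).const_mul C
    simp only [mul_zero, intervalIntegral.integral_zero] at hint
    refine squeeze_zero' ((eventually_gt_atTop 0).mono fun t ht => by positivity)
      ((eventually_gt_atTop 0).mono fun t ht => ?_) (by simpa using hφlim.add hint)
    linarith [(abs_sub_le_iff.1 (hclose t ht)).2]

/-- **Theorem 1.3 (asymptotic stability).**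
If `u, v` are globally defined mild solutions with forcings `g_u, g_v` and weighted norms
`≤ μ`, where `2 M c μ^{ρ-1} B < 1`, then `t^{αε}‖g_u t - g_v t‖ → 0` as `t → ∞` if and only
if `t^{αε}‖u t - v t‖ → 0` as `t → ∞`. -/
theorem asymptotic_stability
    {V W : Type*} [NormedAddCommGroup V] [NormedSpace ℝ V] [CompleteSpace V]
    [NormedAddCommGroup W] [NormedSpace ℝ W] [CompleteSpace W]
    (ρ α ε M c B : ℝ)
    (hρ : 1 < ρ) (hα : 1 < α) (hε : 0 < ε) (hαρε : α * ρ * ε < 1)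
    (hM : 0 < M) (hc : 0 < c)
    (R : ℝ → W →L[ℝ] V)
    (hRcont : ∀ w : W, ContinuousOn (fun t => R t w) (Ioi (0:ℝ)))
    (hRbound : ∀ t > (0:ℝ), ∀ w : W, ‖R t w‖ ≤ M * t ^ (α * (ρ - 1) * ε - 1) * ‖w‖)
    (f : V → W) (hf0 : f 0 = 0)
    (hf : ∀ x y : V, ‖f x - f y‖ ≤ c * (‖x‖ ^ (ρ - 1) + ‖y‖ ^ (ρ - 1)) * ‖x - y‖)
    (hBint : IntervalIntegrable
      (fun s => (1 - s) ^ (α * (ρ - 1) * ε - 1) * s ^ (-(α * ρ * ε))) volume 0 1)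
    (hB : B = ∫ s in (0:ℝ)..1, (1 - s) ^ (α * (ρ - 1) * ε - 1) * s ^ (-(α * ρ * ε)))
    (μ : ℝ) (hμ : 0 < μ) (hsmall : 2 * M * c * μ ^ (ρ - 1) * B < 1)
    (gu gv : ℝ → V) (hgu : ContinuousOn gu (Ioi 0)) (hgv : ContinuousOn gv (Ioi 0))
    (u v : ℝ → V)
    (hu : IsMildSolutionOn R f gu u (Ioi 0))
    (hv : IsMildSolutionOn R f gv v (Ioi 0))
    (hubdd : ∀ t > (0:ℝ), t ^ (α * ε) * ‖u t‖ ≤ μ)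
    (hvbdd : ∀ t > (0:ℝ), t ^ (α * ε) * ‖v t‖ ≤ μ) :
    Tendsto (fun t => t ^ (α * ε) * ‖gu t - gv t‖) atTop (𝓝 0) ↔
      Tendsto (fun t => t ^ (α * ε) * ‖u t - v t‖) atTop (𝓝 0) :=
  asymptotic_stability_general ρ α ε M c B hρ hM hc R hRbound f hf hBint hB μ hμ hsmall gu gv u v hu
    hv hubdd hvbdd
end

section
/- Let a > 0, b ∈ [0,1) and C ≥ 0 be real numbers, and let h : (0,∞) → ℝ be measurable with 0 ≤ h(t) ≤ C for all t > 0. Then limsup_{t→∞} ∫₀^1 (1−s)^{a−1} s^{−b} h(st) ds ≤ (∫₀^1 (1−s)^{a−1} s^{−b} ds) · limsup_{t→∞} h(t). -/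
/-!
Write `K ≥ 0` for the kernel and `L = limsup h`. Given `δ ∈ (0, 1]`, eventually `h ≤ L + δ`
beyond some `T`, so for `t ≥ T / δ` the part of the integral over `[δ, 1]` only sees values
`h (s t) ≤ L + δ`, while the part over `(0, δ]` is at most `C ∫₀^δ K`. Hence the limsup is at most
`C ∫₀^δ K + (L + δ) ∫_δ^1 K`, which tends to `(∫₀^1 K) L` as `δ → 0⁺` because the primitive of the
integrable kernel is continuous.
-/

open MeasureTheory intervalIntegral Filter Set Topology

theorem intervalIntegrable_one_sub_rpow_mul_rpow {a b : ℝ} (ha : 0 < a) (hb : b < 1) :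
    IntervalIntegrable (fun s : ℝ => (1 - s) ^ (a - 1) * s ^ (-b)) volume 0 1 := by
  have hleft :
      IntervalIntegrable (fun s : ℝ => (1 - s) ^ (a - 1) * s ^ (-b)) volume 0 (1 / 2) :=
    (intervalIntegrable_rpow' (by linarith)).continuousOn_mul <|
      ContinuousOn.rpow_const (by fun_prop) fun s hs => by
        rw [uIcc_of_le (by norm_num)] at hs
        exact Or.inl (by linarith [hs.2])
  have hright :
      IntervalIntegrable (fun s : ℝ => (1 - s) ^ (a - 1) * s ^ (-b)) volume (1 / 2) 1 := by
    have h := (intervalIntegrable_rpow' (r := a - 1) (a := 0) (b := 1 / 2)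
      (by linarith)).comp_sub_left 1
    norm_num at h
    refine h.symm.mul_continuousOn (ContinuousOn.rpow_const (by fun_prop) fun s hs => ?_)
    rw [uIcc_of_le (by norm_num)] at hs
    exact Or.inl (by linarith [hs.1])
  exact hleft.trans hright

section KernelAverage

variable {K h : ℝ → ℝ} {C : ℝ}

theorem norm_mul_comp_mul_le (hK0 : ∀ s ∈ Ioc 0 1, 0 ≤ K s) (hbdd : ∀ t > 0, |h t| ≤ C)
    {s t : ℝ} (hs : s ∈ Ioc 0 1) (ht : 0 < t) : ‖K s * h (s * t)‖ ≤ C * K s := by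
  rw [norm_mul, Real.norm_of_nonneg (hK0 s hs), mul_comm]
  exact mul_le_mul_of_nonneg_right (hbdd _ (mul_pos hs.1 ht)) (hK0 s hs)

theorem intervalIntegrable_mul_comp_mul (hK : IntervalIntegrable K volume 0 1)
    (hK0 : ∀ s ∈ Ioc 0 1, 0 ≤ K s) (hmeas : Measurable h) (hbdd : ∀ t > 0, |h t| ≤ C)
    {t : ℝ} (ht : 0 < t) : IntervalIntegrable (fun s => K s * h (s * t)) volume 0 1 := by
  refine (hK.const_mul C).mono_fun' ?_ ?_ <;> rw [uIoc_of_le zero_le_one]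
  · exact hK.1.aestronglyMeasurable.mul (hmeas.comp (measurable_mul_const t)).aestronglyMeasurable
  · rw [EventuallyLE, ae_restrict_iff' measurableSet_Ioc]
    exact ae_of_all _ fun s hs => norm_mul_comp_mul_le hK0 hbdd hs ht

theorem abs_integral_mul_comp_mul_le (hK : IntervalIntegrable K volume 0 1)
    (hK0 : ∀ s ∈ Ioc 0 1, 0 ≤ K s) (hbdd : ∀ t > 0, |h t| ≤ C) {t : ℝ} (ht : 0 < t) :
    |∫ s in 0..1, K s * h (s * t)| ≤ C * ∫ s in 0..1, K s := by
  rw [← intervalIntegral.integral_const_mul]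
  exact norm_integral_le_of_norm_le zero_le_one
    (ae_of_all _ fun s hs => norm_mul_comp_mul_le hK0 hbdd hs ht) (hK.const_mul C)

theorem eventually_integral_mul_comp_mul_le (hK : IntervalIntegrable K volume 0 1)
    (hK0 : ∀ s ∈ Ioc 0 1, 0 ≤ K s) (hmeas : Measurable h) (hbdd : ∀ t > 0, |h t| ≤ C)
    {M T δ : ℝ} (hT : ∀ u ≥ T, h u ≤ M) (hδ : δ ∈ Ioc 0 1) :
    ∀ᶠ t in atTop, ∫ s in 0..1, K s * h (s * t) ≤
      C * (∫ s in 0..δ, K s) + M * ∫ s in δ..1, K s := by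
  have hsub₀ : uIcc 0 δ ⊆ uIcc 0 1 := uIcc_subset_uIcc_left (by simp [hδ.1.le, hδ.2])
  have hsub₁ : uIcc δ 1 ⊆ uIcc 0 1 := uIcc_subset_uIcc_right (by simp [hδ.1.le, hδ.2])
  filter_upwards [eventually_gt_atTop 0, eventually_ge_atTop (T / δ)] with t ht htT
  have hf := intervalIntegrable_mul_comp_mul hK hK0 hmeas hbdd ht
  rw [← integral_add_adjacent_intervals (hf.mono_set hsub₀) (hf.mono_set hsub₁),
    ← intervalIntegral.integral_const_mul, ← intervalIntegral.integral_const_mul]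
  gcongr ?_ + ?_
  · refine integral_mono_on_of_le_Ioo hδ.1.le (hf.mono_set hsub₀)
      ((hK.mono_set hsub₀).const_mul C) fun s hs => ?_
    have hs' : s ∈ Ioc 0 1 := ⟨hs.1, hs.2.le.trans hδ.2⟩
    exact (le_abs_self _).trans (norm_mul_comp_mul_le hK0 hbdd hs' ht)
  · refine integral_mono_on hδ.2 (hf.mono_set hsub₁) ((hK.mono_set hsub₁).const_mul M)
      fun s hs => ?_
    have hsT : T ≤ s * t := (div_le_iff₀ hδ.1).1 htT |>.trans (by nlinarith [hs.1])
    rw [mul_comm M]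
    exact mul_le_mul_of_nonneg_left (hT _ hsT) (hK0 s ⟨hδ.1.trans_le hs.1, hs.2⟩)

theorem tendsto_integral_split_nhdsGT_zero (hK : IntervalIntegrable K volume 0 1) (C L : ℝ) :
    Tendsto (fun δ => C * (∫ s in 0..δ, K s) + (L + δ) * ∫ s in δ..1, K s) (𝓝[>] 0)
      (𝓝 ((∫ s in 0..1, K s) * L)) := by
  have hIcc : uIcc (0 : ℝ) 1 ∈ 𝓝[>] 0 := by
    rw [uIcc_of_le zero_le_one]
    exact Icc_mem_nhdsGT zero_lt_one
  have hint := (intervalIntegrable_iff' (f := K)).1 hK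
  have hP := (continuousOn_primitive_interval hint 0 left_mem_uIcc).mono_of_mem_nhdsWithin hIcc
  have hQ :=
    (continuousOn_primitive_interval_left hint 0 left_mem_uIcc).mono_of_mem_nhdsWithin hIcc
  have := (tendsto_const_nhds (x := C)).mul hP.tendsto |>.add <|
    ((tendsto_const_nhds (x := L)).add (tendsto_id.mono_left nhdsWithin_le_nhds)).mul hQ.tendsto
  rwa [integral_same, mul_zero, zero_add, add_zero, mul_comm] at this

theorem limsup_integral_mul_comp_mul_le (hK : IntervalIntegrable K volume 0 1)
    (hK0 : ∀ s ∈ Ioc 0 1, 0 ≤ K s) (hmeas : Measurable h) (hbdd : ∀ t > 0, |h t| ≤ C) :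
    limsup (fun t => ∫ s in 0..1, K s * h (s * t)) atTop ≤
      (∫ s in 0..1, K s) * limsup h atTop := by
  have hh_bdd : IsBoundedUnder (· ≤ ·) atTop h :=
    ⟨C, eventually_gt_atTop 0 |>.mono fun t ht => (le_abs_self _).trans (hbdd t ht)⟩
  have hF_cobdd : IsCoboundedUnder (· ≤ ·) atTop fun t => ∫ s in 0..1, K s * h (s * t) :=
    isCoboundedUnder_le_of_eventually_le atTop (x := -(C * ∫ s in 0..1, K s)) <|
      eventually_gt_atTop 0 |>.mono fun t ht =>
        neg_le_of_abs_le (abs_integral_mul_comp_mul_le hK hK0 hbdd ht)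
  refine ge_of_tendsto (tendsto_integral_split_nhdsGT_zero hK C (limsup h atTop)) ?_
  filter_upwards [Ioc_mem_nhdsGT zero_lt_one] with δ hδ
  obtain ⟨T, hT⟩ :=
    (eventually_lt_of_limsup_lt (lt_add_of_pos_right _ hδ.1) hh_bdd).exists_forall_of_atTop
  exact limsup_le_of_le hF_cobdd
    (eventually_integral_mul_comp_mul_le hK hK0 hmeas hbdd (fun u hu => (hT u hu).le) hδ)

end KernelAverage

theorem limsup_beta_kernel_general (a b C : ℝ) (ha : 0 < a) (hb1 : b < 1)
    (h : ℝ → ℝ) (hmeas : Measurable h)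
    (hnn : ∀ t > (0:ℝ), 0 ≤ h t) (hbdd : ∀ t > (0:ℝ), h t ≤ C) :
    limsup (fun t => ∫ s in (0:ℝ)..1, (1 - s) ^ (a - 1) * s ^ (-b) * h (s * t)) atTop ≤
      (∫ s in (0:ℝ)..1, (1 - s) ^ (a - 1) * s ^ (-b)) * limsup h atTop :=
  limsup_integral_mul_comp_mul_le (intervalIntegrable_one_sub_rpow_mul_rpow ha hb1)
    (fun s hs => mul_nonneg (Real.rpow_nonneg (sub_nonneg.2 hs.2) _) (Real.rpow_nonneg hs.1.le _))
    hmeas fun t ht => abs_le.2 ⟨by linarith [hnn t ht, hbdd t ht], hbdd t ht⟩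

/-- **Reverse-Fatou estimate for the singular Beta kernel.**
For `a > 0`, `b ∈ [0,1)`, and a measurable `h : (0,∞) → ℝ` with `0 ≤ h ≤ C`,
`limsup_{t→∞} ∫₀^1 (1-s)^{a-1} s^{-b} h(st) ds ≤ (∫₀^1 (1-s)^{a-1} s^{-b} ds) · limsup_{t→∞} h(t)`. -/
theorem limsup_beta_kernel (a b C : ℝ) (ha : 0 < a) (hb0 : 0 ≤ b) (hb1 : b < 1)
    (hC : 0 ≤ C) (h : ℝ → ℝ) (hmeas : Measurable h)
    (hnn : ∀ t > (0:ℝ), 0 ≤ h t) (hbdd : ∀ t > (0:ℝ), h t ≤ C) :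
    limsup (fun t => ∫ s in (0:ℝ)..1, (1 - s) ^ (a - 1) * s ^ (-b) * h (s * t)) atTop ≤
      (∫ s in (0:ℝ)..1, (1 - s) ^ (a - 1) * s ^ (-b)) * limsup h atTop :=
  limsup_beta_kernel_general a b C ha hb1 h hmeas hnn hbdd
end

section
/- Assume the abstract setting described in the context. In addition, let Z be a real Banach space, let j : V → Z be a bounded linear map, and let R₀ : (0,∞) → (W →L Z) be a family of bounded linear operators such that j(R(t)w) = R₀(t)w and ‖R₀(t)w‖_Z ≤ M t^{αρε−1} ‖w‖_W for all t > 0 and w ∈ W. Let τ ∈ (0,∞), let g : (0,τ] → V be continuous, let u be a mild solution with forcing g on (0,τ] with sup_{t∈(0,τ]} t^{αε}‖u(t)‖_V < ∞ and lim_{t→0⁺} t^{αε}‖u(t)‖_V = 0, and let g₀ ∈ Z with lim_{t→0⁺} ‖j(g(t)) − g₀‖_Z = 0. Then lim_{t→0⁺} ‖j(u(t)) − g₀‖_Z = 0. -/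
open MeasureTheory Set Filter Topology intervalIntegral
open scoped ENNReal

/-!
Applying `j` to the mild-solution identity gives
`j (u t) - g₀ = (j (g t) - g₀) + ∫₀^t R₀(t-s) f(u s) ds`. If `s^{αε} ‖u s‖ ≤ κ` on `(0,t)`, then
`‖f (u s)‖ ≤ c κ^ρ s^{-αρε}`, and the smoothing bound of `R₀` makes the integral at most
`M c κ^ρ ∫₀^t (t-s)^{αρε-1} s^{-αρε} ds`, a Beta integral that does not depend on `t` because
the exponents add up to `-1`. As `κ` can be taken arbitrarily small for small `t`,
the integral term tends to `0`.
-/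

lemma intervalIntegrable_sub_rpow_mul_rpow {p q t : ℝ} (hp : -1 < p) (hq : -1 < q) (ht : 0 < t) :
    IntervalIntegrable (fun s => (t - s) ^ p * s ^ q) volume 0 t := by
  have hleft : IntervalIntegrable (fun s => (t - s) ^ p * s ^ q) volume 0 (t / 2) := by
    refine (intervalIntegrable_rpow' hq).continuousOn_mul <|
      ContinuousOn.rpow_const (by fun_prop) fun s hs => Or.inl ?_
    rw [uIcc_of_le (by positivity)] at hs
    linarith [hs.2]
  have hright : IntervalIntegrable (fun s => (t - s) ^ p * s ^ q) volume (t / 2) t := by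
    have hsing := (intervalIntegrable_rpow' hp (a := t / 2) (b := 0)).comp_sub_left t
    rw [sub_half, sub_zero] at hsing
    refine hsing.mul_continuousOn <| ContinuousOn.rpow_const (by fun_prop) fun s hs => Or.inl ?_
    rw [uIcc_of_le (by linarith)] at hs
    linarith [hs.1]
  exact hleft.trans hright

lemma integral_sub_rpow_mul_rpow (p q : ℝ) {t : ℝ} (ht : 0 < t) :
    ∫ s in (0:ℝ)..t, (t - s) ^ p * s ^ q
      = t ^ (p + q + 1) * ∫ s in (0:ℝ)..1, (1 - s) ^ p * s ^ q := by
  have hscale : ∀ s ∈ uIcc 0 t,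
      (t - s) ^ p * s ^ q = t ^ (p + q) * ((1 - s / t) ^ p * (s / t) ^ q) := by
    intro s hs
    rw [uIcc_of_le ht.le] at hs
    rw [one_sub_div ht.ne', Real.div_rpow (by linarith [hs.2]) ht.le,
      Real.div_rpow hs.1 ht.le, Real.rpow_add ht]
    field_simp
  rw [integral_congr hscale, intervalIntegral.integral_const_mul,
    integral_comp_div (fun s => (1 - s) ^ p * s ^ q) ht.ne', zero_div, div_self ht.ne',
    smul_eq_mul, ← mul_assoc, ← Real.rpow_add_one ht.ne']

lemma norm_le_mul_norm_rpow {V W : Type*} [SeminormedAddCommGroup V] [SeminormedAddCommGroup W]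
    {f : V → W} {c ρ : ℝ} (hρ : 1 < ρ) (hf0 : f 0 = 0)
    (hf : ∀ x y : V, ‖f x - f y‖ ≤ c * (‖x‖ ^ (ρ - 1) + ‖y‖ ^ (ρ - 1)) * ‖x - y‖) (x : V) :
    ‖f x‖ ≤ c * ‖x‖ ^ ρ := by
  have h := hf x 0
  rwa [hf0, sub_zero, sub_zero, norm_zero, Real.zero_rpow (by linarith), add_zero, mul_assoc,
    ← Real.rpow_add_one' (norm_nonneg x) (by linarith), sub_add_cancel] at h

lemma rpow_le_rpow_mul_rpow_neg {x κ s γ ρ : ℝ} (hx : 0 ≤ x) (hs : 0 < s) (hρ : 0 ≤ ρ)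
    (h : s ^ γ * x ≤ κ) : x ^ ρ ≤ κ ^ ρ * s ^ (-(γ * ρ)) := by
  have hsγ : 0 < s ^ γ := Real.rpow_pos_of_pos hs γ
  have hx' : x ≤ κ * s ^ (-γ) := by
    rw [Real.rpow_neg hs.le, ← div_eq_mul_inv, le_div_iff₀ hsγ]
    linarith
  calc x ^ ρ ≤ (κ * s ^ (-γ)) ^ ρ := Real.rpow_le_rpow hx hx' hρ
    _ = κ ^ ρ * s ^ (-(γ * ρ)) := by
      rw [Real.mul_rpow ((mul_nonneg hsγ.le hx).trans h) (by positivity), ← Real.rpow_mul hs.le, neg_mul]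

lemma eventually_nhdsGT_forall_Ioo {α : Type*} [LinearOrder α] [TopologicalSpace α]
    [OrderTopology α] [NoMaxOrder α] {a : α} {p : α → Prop} (h : ∀ᶠ s in 𝓝[>] a, p s) :
    ∀ᶠ t in 𝓝[>] a, ∀ s ∈ Ioo a t, p s := by
  obtain ⟨b, hab, hsub⟩ := mem_nhdsGT_iff_exists_Ioo_subset.1 h
  filter_upwards [Ioo_mem_nhdsGT hab] with t ht s hs using hsub ⟨hs.1, hs.2.trans ht.2⟩

lemma tendsto_zero_of_forall_eventually_norm_le_rpow {ι E : Type*} [SeminormedAddCommGroup E]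
    {l : Filter ι} {F : ι → E} {K ρ : ℝ} (hρ : 0 < ρ)
    (h : ∀ κ > 0, ∀ᶠ i in l, ‖F i‖ ≤ K * κ ^ ρ) : Tendsto F l (𝓝 0) := by
  have hK : Tendsto (fun κ : ℝ => K * κ ^ ρ) (𝓝[>] 0) (𝓝 0) := by
    have := ((Real.continuousAt_rpow_const 0 ρ (Or.inr hρ.le)).tendsto.const_mul K)
    rw [Real.zero_rpow hρ.ne', mul_zero] at this
    exact this.mono_left nhdsWithin_le_nhds
  refine Metric.tendsto_nhds.2 fun η hη => ?_
  obtain ⟨κ, hκη, hκ⟩ := ((hK.eventually (gt_mem_nhds hη)).and self_mem_nhdsWithin).exists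
  filter_upwards [h κ hκ] with i hi
  rw [dist_zero_right]
  exact hi.trans_lt hκη

lemma norm_integral_kernel_apply_le {W Z : Type*} [NormedAddCommGroup W] [NormedSpace ℝ W]
    [NormedAddCommGroup Z] [NormedSpace ℝ Z] {K : ℝ → W →L[ℝ] Z} {F : ℝ → W} {M C a t : ℝ}
    (hM : 0 ≤ M) (ha0 : 0 < a) (ha1 : a < 1) (ht : 0 < t)
    (hK : ∀ r > 0, ∀ w, ‖K r w‖ ≤ M * r ^ (a - 1) * ‖w‖)
    (hF : ∀ s ∈ Ioo 0 t, ‖F s‖ ≤ C * s ^ (-a)) :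
    ‖∫ s in (0:ℝ)..t, K (t - s) (F s)‖
      ≤ M * C * ∫ s in (0:ℝ)..1, (1 - s) ^ (a - 1) * s ^ (-a) := by
  have hpoint : ∀ᵐ s, s ∈ Ioc 0 t →
      ‖K (t - s) (F s)‖ ≤ M * C * ((t - s) ^ (a - 1) * s ^ (-a)) := by
    filter_upwards [Measure.ae_ne volume t] with s hst hs
    have hts : 0 < t - s := sub_pos.2 (lt_of_le_of_ne hs.2 hst)
    calc ‖K (t - s) (F s)‖ ≤ M * (t - s) ^ (a - 1) * ‖F s‖ := hK _ hts _
      _ ≤ M * (t - s) ^ (a - 1) * (C * s ^ (-a)) := by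
        gcongr
        exact hF s ⟨hs.1, sub_pos.1 hts⟩
      _ = M * C * ((t - s) ^ (a - 1) * s ^ (-a)) := by ring
  have hbound := (intervalIntegrable_sub_rpow_mul_rpow (p := a - 1) (q := -a)
    (by linarith) (by linarith) ht).const_mul (M * C)
  calc ‖∫ s in (0:ℝ)..t, K (t - s) (F s)‖
      ≤ ∫ s in (0:ℝ)..t, M * C * ((t - s) ^ (a - 1) * s ^ (-a)) :=
        norm_integral_le_of_norm_le ht.le hpoint hbound
    _ = M * C * ∫ s in (0:ℝ)..1, (1 - s) ^ (a - 1) * s ^ (-a) := by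
        rw [intervalIntegral.integral_const_mul, integral_sub_rpow_mul_rpow _ _ ht,
          show a - 1 + -a + 1 = 0 by ring, Real.rpow_zero, one_mul]

lemma eventually_forall_Ioo_norm_apply_le {V W : Type*} [SeminormedAddCommGroup V]
    [SeminormedAddCommGroup W] {f : V → W} {u : ℝ → V} {c ρ γ κ : ℝ} (hρ : 1 < ρ)
    (hc : 0 ≤ c) (hf0 : f 0 = 0)
    (hf : ∀ x y : V, ‖f x - f y‖ ≤ c * (‖x‖ ^ (ρ - 1) + ‖y‖ ^ (ρ - 1)) * ‖x - y‖)
    (hu0 : Tendsto (fun t => t ^ γ * ‖u t‖) (𝓝[>] 0) (𝓝 0)) (hκ : 0 < κ) :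
    ∀ᶠ t in 𝓝[>] 0, ∀ s ∈ Ioo 0 t, ‖f (u s)‖ ≤ c * κ ^ ρ * s ^ (-(γ * ρ)) := by
  filter_upwards [eventually_nhdsGT_forall_Ioo ((tendsto_order.1 hu0).2 κ hκ)] with t hsmall s hs
  calc ‖f (u s)‖ ≤ c * ‖u s‖ ^ ρ := norm_le_mul_norm_rpow hρ hf0 hf _
    _ ≤ c * (κ ^ ρ * s ^ (-(γ * ρ))) := by
      gcongr
      exact rpow_le_rpow_mul_rpow_neg (norm_nonneg _) hs.1 (by linarith) (hsmall s hs).le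
    _ = c * κ ^ ρ * s ^ (-(γ * ρ)) := (mul_assoc _ _ _).symm

lemma IsMildSolutionOn.map_eq {V W Z : Type*} [NormedAddCommGroup V] [NormedSpace ℝ V]
    [CompleteSpace V] [NormedAddCommGroup W] [NormedSpace ℝ W] [NormedAddCommGroup Z]
    [NormedSpace ℝ Z] [CompleteSpace Z] {R : ℝ → W →L[ℝ] V} {f : V → W} {g u : ℝ → V}
    {S : Set ℝ} (hu : IsMildSolutionOn R f g u S) (j : V →L[ℝ] Z) {t : ℝ} (ht : t ∈ S) :
    j (u t) = j (g t) + ∫ s in (0:ℝ)..t, j (R (t - s) (f (u s))) := by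
  obtain ⟨hint, hut⟩ := hu.2 t ht
  rw [hut, map_add, j.intervalIntegral_comp_comm hint]

theorem attains_initial_datum_general
    {V W : Type*} [NormedAddCommGroup V] [NormedSpace ℝ V] [CompleteSpace V]
    [NormedAddCommGroup W] [NormedSpace ℝ W]
    (ρ α ε M c : ℝ)
    (hρ : 1 < ρ) (hα : 1 < α) (hε : 0 < ε) (hαρε : α * ρ * ε < 1)
    (hM : 0 < M) (hc : 0 < c)
    (R : ℝ → W →L[ℝ] V)
    (f : V → W) (hf0 : f 0 = 0)
    (hf : ∀ x y : V, ‖f x - f y‖ ≤ c * (‖x‖ ^ (ρ - 1) + ‖y‖ ^ (ρ - 1)) * ‖x - y‖)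
    {Z : Type*} [NormedAddCommGroup Z] [NormedSpace ℝ Z] [CompleteSpace Z]
    (j : V →L[ℝ] Z) (R₀ : ℝ → W →L[ℝ] Z)
    (hjR : ∀ t > (0:ℝ), ∀ w : W, j (R t w) = R₀ t w)
    (hR₀bound : ∀ t > (0:ℝ), ∀ w : W, ‖R₀ t w‖ ≤ M * t ^ (α * ρ * ε - 1) * ‖w‖)
    (τ : ℝ) (hτ : 0 < τ)
    (g : ℝ → V)
    (u : ℝ → V) (hu : IsMildSolutionOn R f g u (Ioc 0 τ))
    (hu0 : Tendsto (fun t => t ^ (α * ε) * ‖u t‖) (𝓝[>] 0) (𝓝 0))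
    (g₀ : Z) (hg0 : Tendsto (fun t => ‖j (g t) - g₀‖) (𝓝[>] 0) (𝓝 0)) :
    Tendsto (fun t => ‖j (u t) - g₀‖) (𝓝[>] 0) (𝓝 0) := by
  set a := α * ρ * ε
  set B := ∫ s in (0:ℝ)..1, (1 - s) ^ (a - 1) * s ^ (-a)
  have hjRbound : ∀ r > 0, ∀ w, ‖j.comp (R r) w‖ ≤ M * r ^ (a - 1) * ‖w‖ := fun r hr w => by
    rw [ContinuousLinearMap.comp_apply, hjR r hr]
    exact hR₀bound r hr w
  have hI : Tendsto (fun t => ∫ s in (0:ℝ)..t, j (R (t - s) (f (u s)))) (𝓝[>] 0) (𝓝 0) := by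
    refine tendsto_zero_of_forall_eventually_norm_le_rpow (K := M * c * B) (ρ := ρ) (by linarith)
      fun κ hκ => ?_
    filter_upwards [eventually_forall_Ioo_norm_apply_le hρ hc.le hf0 hf hu0 hκ,
      self_mem_nhdsWithin] with t hfu ht
    rw [mul_right_comm α ε ρ] at hfu
    calc _ ≤ M * (c * κ ^ ρ) * B :=
          norm_integral_kernel_apply_le hM.le (by positivity) hαρε ht hjRbound hfu
      _ = M * c * B * κ ^ ρ := by ring
  have hdecomp : ∀ t ∈ Ioc 0 τ,
      j (g t) - g₀ + ∫ s in (0:ℝ)..t, j (R (t - s) (f (u s))) = j (u t) - g₀ := fun t ht => by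
    rw [hu.map_eq j ht]
    abel
  have hsum := (tendsto_zero_iff_norm_tendsto_zero.2 hg0).add hI
  rw [add_zero] at hsum
  simpa using (hsum.congr' (eventually_of_mem (Ioc_mem_nhdsGT hτ) hdecomp)).norm

/-- **Attainment of the initial datum (Part 1 of the proof of Theorem 1.1).**
With `Z` playing the role of `X¹_q = L^q(Ω)`, `j : V → Z` the embedding, and `R₀(t)` the
operator `R(t)` viewed in `Z` with smoothing bound `M t^{αρε-1}`: if `u` is a mild solution
with forcing `g` on `(0,τ]` with bounded weighted norm, `t^{αε}‖u t‖ → 0` as `t → 0⁺`, and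
`‖j (g t) - g₀‖ → 0` as `t → 0⁺`, then `‖j (u t) - g₀‖ → 0` as `t → 0⁺`. -/
theorem attains_initial_datum
    {V W : Type*} [NormedAddCommGroup V] [NormedSpace ℝ V] [CompleteSpace V]
    [NormedAddCommGroup W] [NormedSpace ℝ W] [CompleteSpace W]
    (ρ α ε M c B : ℝ)
    (hρ : 1 < ρ) (hα : 1 < α) (hε : 0 < ε) (hαρε : α * ρ * ε < 1)
    (hM : 0 < M) (hc : 0 < c)
    (R : ℝ → W →L[ℝ] V)
    (hRcont : ∀ w : W, ContinuousOn (fun t => R t w) (Ioi (0:ℝ)))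
    (hRbound : ∀ t > (0:ℝ), ∀ w : W, ‖R t w‖ ≤ M * t ^ (α * (ρ - 1) * ε - 1) * ‖w‖)
    (f : V → W) (hf0 : f 0 = 0)
    (hf : ∀ x y : V, ‖f x - f y‖ ≤ c * (‖x‖ ^ (ρ - 1) + ‖y‖ ^ (ρ - 1)) * ‖x - y‖)
    (hBint : IntervalIntegrable
      (fun s => (1 - s) ^ (α * (ρ - 1) * ε - 1) * s ^ (-(α * ρ * ε))) volume 0 1)
    (hB : B = ∫ s in (0:ℝ)..1, (1 - s) ^ (α * (ρ - 1) * ε - 1) * s ^ (-(α * ρ * ε)))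
    {Z : Type*} [NormedAddCommGroup Z] [NormedSpace ℝ Z] [CompleteSpace Z]
    (j : V →L[ℝ] Z) (R₀ : ℝ → W →L[ℝ] Z)
    (hjR : ∀ t > (0:ℝ), ∀ w : W, j (R t w) = R₀ t w)
    (hR₀bound : ∀ t > (0:ℝ), ∀ w : W, ‖R₀ t w‖ ≤ M * t ^ (α * ρ * ε - 1) * ‖w‖)
    (τ : ℝ) (hτ : 0 < τ)
    (g : ℝ → V) (hg : ContinuousOn g (Ioc 0 τ))
    (u : ℝ → V) (hu : IsMildSolutionOn R f g u (Ioc 0 τ))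
    (hubdd : ∃ C : ℝ, ∀ t ∈ Ioc (0:ℝ) τ, t ^ (α * ε) * ‖u t‖ ≤ C)
    (hu0 : Tendsto (fun t => t ^ (α * ε) * ‖u t‖) (𝓝[>] 0) (𝓝 0))
    (g₀ : Z) (hg0 : Tendsto (fun t => ‖j (g t) - g₀‖) (𝓝[>] 0) (𝓝 0)) :
    Tendsto (fun t => ‖j (u t) - g₀‖) (𝓝[>] 0) (𝓝 0) :=
  attains_initial_datum_general ρ α ε M c hρ hα hε hαρε hM hc R f hf0 hf j R₀ hjR hR₀bound τ hτ g u
    hu hu0 g₀ hg0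
end

section
/- Assume the abstract setting described in the context. In addition, let V_θ be a real Banach space, let j_θ : V_θ → V be a bounded linear map, let δ > 0 with δ ≤ α(ρ−1)ε (in the paper δ = α(ρε−θ) for θ ∈ [0,ρε)), and let R_θ : (0,∞) → (W →L V_θ) be a family of bounded linear operators such that for every w ∈ W the map t ↦ R_θ(t)w is continuous on (0,∞), j_θ(R_θ(t)w) = R(t)w, and ‖R_θ(t)w‖_{V_θ} ≤ M t^{δ−1} ‖w‖_W for all t > 0 and w ∈ W. Let τ ∈ (0,∞), let g_θ : (0,τ] → V_θ be continuous, set g := j_θ ∘ g_θ, and let u be a mild solution with forcing g on (0,τ] with sup_{t∈(0,τ]} t^{αε}‖u(t)‖_V < ∞. Then there exists a continuous ũ : (0,τ] → V_θ with j_θ(ũ(t)) = u(t) for all t ∈ (0,τ]; moreover, writing θ := ρε − δ/α, if lim_{t→0⁺} t^{αθ}‖g_θ(t)‖_{V_θ} = 0 and lim_{t→0⁺} t^{αε}‖u(t)‖_V = 0, then lim_{t→0⁺} t^{αθ}‖ũ(t)‖_{V_θ} = 0. -/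
/-!
The lift is `ũ t = gθ t + ∫₀ᵗ Rθ(t-s) f(u s) ds`, which `jθ` maps to `u t`. After the substitution
`s = tσ`, and with `κ` a bound for `s^{αε}‖u s‖` on `(0,t]`, the integrand is at most
`M c κ^ρ t^{δ-1-αρε} σ^{-αρε} (1-σ)^{δ-1}`; this Beta weight is integrable since `δ > 0` and
`αρε < 1`. Dominated convergence then gives the continuity of `ũ`, and since the powers of `t`
cancel in `t^{αρε-δ} · t · t^{δ-1-αρε}`, the weighted norm of the Duhamel term is `O(κ^ρ)`,
which tends to `0` with `κ` when `t^{αε}‖u t‖ → 0`.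
-/

open MeasureTheory Set Filter Topology intervalIntegral
open scoped ENNReal

theorem ae_mem_Ioo_of_mem_uIoc {a b : ℝ} (hab : a ≤ b) :
    ∀ᵐ σ ∂volume, σ ∈ uIoc a b → σ ∈ Ioo a b := by
  rw [uIoc_of_le hab]
  filter_upwards [(Ioo_ae_eq_Ioc (μ := volume) (a := a) (b := b)).mem_iff] with σ hσ using hσ.2

theorem mul_mem_Ioc_of_mem_Ioo {t τ σ : ℝ} (ht : t ∈ Ioc 0 τ) (hσ : σ ∈ Ioo 0 1) :
    t * σ ∈ Ioc 0 τ :=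
  ⟨mul_pos ht.1 hσ.1, (mul_le_of_le_one_right ht.1.le hσ.2.le).trans ht.2⟩

theorem intervalIntegrable_rpow_mul_one_sub_rpow {a b : ℝ} (ha : -1 < a) (hb : -1 < b) :
    IntervalIntegrable (fun x : ℝ => x ^ a * (1 - x) ^ b) volume 0 1 := by
  have left : ∀ {a : ℝ} (b : ℝ), -1 < a →
      IntervalIntegrable (fun x : ℝ => x ^ a * (1 - x) ^ b) volume 0 (1 / 2) := by
    intro a b ha
    refine (intervalIntegrable_rpow' ha).mul_continuousOn fun x hx => ?_
    rw [uIcc_of_le (by norm_num)] at hx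
    exact (continuousAt_const.sub continuousAt_id).rpow_const
      (Or.inl (by linarith [hx.2] : (1 : ℝ) - x ≠ 0)) |>.continuousWithinAt
  refine (left b ha).trans ?_
  have right := ((left a hb).comp_sub_left 1).symm
  norm_num at right
  simpa only [mul_comm] using right

section Nonlinearity

variable {V W : Type*} [NormedAddCommGroup V] [NormedAddCommGroup W] {f : V → W} {c ρ : ℝ}

theorem norm_le_mul_rpow_of_norm_sub_le (hρ : 1 < ρ) (hf0 : f 0 = 0)
    (hf : ∀ x y : V, ‖f x - f y‖ ≤ c * (‖x‖ ^ (ρ - 1) + ‖y‖ ^ (ρ - 1)) * ‖x - y‖) (x : V) :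
    ‖f x‖ ≤ c * ‖x‖ ^ ρ := by
  have h := hf x 0
  rwa [hf0, sub_zero, sub_zero, norm_zero, Real.zero_rpow (by linarith), add_zero, mul_assoc,
    ← Real.rpow_add_one' (norm_nonneg x) (by linarith), sub_add_cancel] at h

theorem continuous_of_norm_sub_le (hρ : 1 ≤ ρ)
    (hf : ∀ x y : V, ‖f x - f y‖ ≤ c * (‖x‖ ^ (ρ - 1) + ‖y‖ ^ (ρ - 1)) * ‖x - y‖) :
    Continuous f := by
  refine continuous_iff_continuousAt.2 fun x => tendsto_iff_norm_sub_tendsto_zero.2 ?_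
  have hbound : Continuous fun y : V => c * (‖y‖ ^ (ρ - 1) + ‖x‖ ^ (ρ - 1)) * ‖y - x‖ :=
    (continuous_const.mul (((Real.continuous_rpow_const (by linarith)).comp continuous_norm).add
      continuous_const)).mul (continuous_id.sub continuous_const).norm
  exact squeeze_zero (fun y => norm_nonneg _) (fun y => hf y x) (by simpa using hbound.tendsto x)

end Nonlinearity

theorem continuousAt_apply_of_norm_apply_le {𝕜 X E F : Type*} [NontriviallyNormedField 𝕜]
    [TopologicalSpace X] [NormedAddCommGroup E] [NormedSpace 𝕜 E] [NormedAddCommGroup F]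
    [NormedSpace 𝕜 F] {T : X → E →L[𝕜] F} {b : X → ℝ} {x₀ : X} {w₀ : E}
    (hT : ContinuousAt (fun x => T x w₀) x₀) (hb : ContinuousAt b x₀)
    (hTb : ∀ᶠ x in 𝓝 x₀, ∀ w, ‖T x w‖ ≤ b x * ‖w‖) :
    ContinuousAt (fun p : X × E => T p.1 p.2) (x₀, w₀) := by
  have hsplit : (fun p : X × E => T p.1 p.2) = fun p => T p.1 (p.2 - w₀) + T p.1 w₀ := by
    ext p; simp
  have hsmall : Tendsto (fun p : X × E => T p.1 (p.2 - w₀)) (𝓝 (x₀, w₀)) (𝓝 0) := by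
    refine squeeze_zero_norm' ((continuousAt_fst.eventually hTb).mono fun p hp => hp _) ?_
    have : ContinuousAt (fun p : X × E => b p.1 * ‖p.2 - w₀‖) (x₀, w₀) :=
      (hb.comp continuousAt_fst).mul (continuous_snd.sub continuous_const).norm.continuousAt
    simpa using this.tendsto
  rw [ContinuousAt, hsplit]
  simpa using hsmall.add (hT.comp continuousAt_fst)

section ParametricIntegral

variable {E : Type*} [NormedAddCommGroup E] {a b : ℝ}

theorem intervalIntegrable_of_continuousOn_Ioo_of_norm_le {φ : ℝ → E} {g : ℝ → ℝ} (hab : a ≤ b)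
    (hφ : ContinuousOn φ (Ioo a b)) (hg : IntervalIntegrable g volume a b)
    (hφg : ∀ σ ∈ Ioo a b, ‖φ σ‖ ≤ g σ) : IntervalIntegrable φ volume a b := by
  rw [intervalIntegrable_iff_integrableOn_Ioo_of_le hab] at hg ⊢
  exact Integrable.mono' hg (hφ.aestronglyMeasurable measurableSet_Ioo)
    ((ae_restrict_iff' measurableSet_Ioo).2 (ae_of_all _ hφg))

theorem continuousOn_intervalIntegral_of_norm_le_mul [NormedSpace ℝ E] {X : Type*}
    [TopologicalSpace X] [FirstCountableTopology X]
    {S : Set X} {F : X → ℝ → E} {w : X → ℝ} {g : ℝ → ℝ} (hab : a ≤ b)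
    (hF : ContinuousOn (Function.uncurry F) (S ×ˢ Ioo a b)) (hw : ContinuousOn w S)
    (hg : IntervalIntegrable g volume a b) (hFwg : ∀ x ∈ S, ∀ σ ∈ Ioo a b, ‖F x σ‖ ≤ w x * g σ) :
    ContinuousOn (fun x => ∫ σ in a..b, F x σ) S := by
  intro x₀ hx₀
  have hbound : ∀ x ∈ S, ∀ σ ∈ Ioo a b, ‖F x σ‖ ≤ |w x| * |g σ| := fun x hx σ hσ =>
    (hFwg x hx σ hσ).trans (abs_mul (w x) (g σ) ▸ le_abs_self _)
  have hw_near : ∀ᶠ x in 𝓝[S] x₀, |w x| ≤ |w x₀| + 1 :=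
    ((continuous_abs.continuousAt.comp_continuousWithinAt (hw x₀ hx₀)).eventually
      (gt_mem_nhds (lt_add_one _))).mono fun _ => le_of_lt
  refine continuousWithinAt_of_dominated_interval (bound := fun σ => (|w x₀| + 1) * |g σ|)
    ?_ ?_ (hg.abs.const_mul _) ?_
  · filter_upwards [self_mem_nhdsWithin] with x hx
    refine (intervalIntegrable_of_continuousOn_Ioo_of_norm_le hab ?_ (hg.abs.const_mul |w x|)
      (hbound x hx)).def'.aestronglyMeasurable
    exact hF.comp (Continuous.prodMk_right x).continuousOn fun σ hσ => ⟨hx, hσ⟩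
  · filter_upwards [self_mem_nhdsWithin, hw_near] with x hx hwx
    filter_upwards [ae_mem_Ioo_of_mem_uIoc hab] with σ hσ hσab
    exact (hbound x hx σ (hσ hσab)).trans (by gcongr)
  · filter_upwards [ae_mem_Ioo_of_mem_uIoc hab] with σ hσ hσab
    exact (hF (x₀, σ) ⟨hx₀, hσ hσab⟩).comp (f := fun x => (x, σ))
      (Continuous.prodMk_left σ).continuousWithinAt fun x hx => ⟨hx, hσ hσab⟩

end ParametricIntegral

theorem eventually_nhdsGT_forall_Ioc {p : ℝ → Prop} (h : ∀ᶠ s in 𝓝[>] 0, p s) :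
    ∀ᶠ t in 𝓝[>] 0, ∀ s ∈ Ioc 0 t, p s := by
  obtain ⟨η, hη, hsub⟩ := mem_nhdsGT_iff_exists_Ioo_subset.1 h
  filter_upwards [Ioo_mem_nhdsGT hη] with t ht s hs using hsub ⟨hs.1, hs.2.trans_lt ht.2⟩

theorem tendsto_nhds_zero_of_forall_eventually_le_mul_rpow {ι : Type*} {l : Filter ι}
    {φ : ι → ℝ} {D ρ : ℝ} (hρ : 0 < ρ) (hφ : ∀ᶠ i in l, 0 ≤ φ i)
    (h : ∀ κ > 0, ∀ᶠ i in l, φ i ≤ D * κ ^ ρ) : Tendsto φ l (𝓝 0) := by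
  refine tendsto_order.2 ⟨fun ε hε => hφ.mono fun i hi => hε.trans_le hi, fun ε hε => ?_⟩
  have hlim : Tendsto (fun κ : ℝ => D * κ ^ ρ) (𝓝[>] 0) (𝓝 0) := by
    simpa [Real.zero_rpow hρ.ne'] using
      ((Real.continuousAt_rpow_const 0 ρ (Or.inr hρ.le)).tendsto.const_mul D).mono_left
        nhdsWithin_le_nhds
  obtain ⟨κ, hκε, hκ⟩ := ((hlim.eventually (gt_mem_nhds hε)).and self_mem_nhdsWithin).exists
  exact (h κ hκ).mono fun i hi => hi.trans_lt hκε

theorem tendsto_rpow_mul_norm_add_smul {E : Type*} [NormedAddCommGroup E] [NormedSpace ℝ E]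
    {x y : ℝ → E} {e : ℝ} (hx : Tendsto (fun t => t ^ e * ‖x t‖) (𝓝[>] 0) (𝓝 0))
    (hy : Tendsto (fun t => t ^ (e + 1) * ‖y t‖) (𝓝[>] 0) (𝓝 0)) :
    Tendsto (fun t => t ^ e * ‖x t + t • y t‖) (𝓝[>] 0) (𝓝 0) := by
  refine squeeze_zero' ?_ ?_ (by simpa using hx.add hy)
  · filter_upwards [self_mem_nhdsWithin] with t (ht : 0 < t)
    positivity
  · filter_upwards [self_mem_nhdsWithin] with t (ht : 0 < t)
    calc t ^ e * ‖x t + t • y t‖ ≤ t ^ e * (‖x t‖ + t * ‖y t‖) := by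
          gcongr
          exact (norm_add_le _ _).trans_eq (by rw [norm_smul, Real.norm_of_nonneg ht.le])
      _ = t ^ e * ‖x t‖ + t ^ (e + 1) * ‖y t‖ := by rw [Real.rpow_add_one ht.ne']; ring

theorem rpow_le_mul_rpow_of_rpow_mul_le {s x κ a ρ : ℝ} (hs : 0 < s) (hx : 0 ≤ x) (hρ : 0 ≤ ρ)
    (h : s ^ a * x ≤ κ) : x ^ ρ ≤ κ ^ ρ * s ^ (-(a * ρ)) := by
  have hκ : 0 ≤ κ := (mul_nonneg (Real.rpow_nonneg hs.le a) hx).trans h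
  have hx' : x ≤ κ * s ^ (-a) := by
    rw [Real.rpow_neg hs.le, ← div_eq_mul_inv, le_div_iff₀ (Real.rpow_pos_of_pos hs a), mul_comm]
    exact h
  calc x ^ ρ ≤ (κ * s ^ (-a)) ^ ρ := Real.rpow_le_rpow hx hx' hρ
    _ = κ ^ ρ * s ^ (-(a * ρ)) := by
      rw [Real.mul_rpow hκ (Real.rpow_nonneg hs.le _), ← Real.rpow_mul hs.le, neg_mul]

section Duhamel

variable {V W Vθ : Type*} [NormedAddCommGroup V] [NormedAddCommGroup W] [NormedSpace ℝ W]
  [NormedAddCommGroup Vθ] [NormedSpace ℝ Vθ] {T : ℝ → W →L[ℝ] Vθ} {f : V → W} {u : ℝ → V}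

variable (T f u) in
def duhamelKernel (t σ : ℝ) : Vθ :=
  T (t * (1 - σ)) (f (u (t * σ)))

variable (T f u) in
noncomputable def rescaledDuhamel (t : ℝ) : Vθ :=
  ∫ σ in (0 : ℝ)..1, duhamelKernel T f u t σ

theorem continuousOn_duhamelKernel {τ : ℝ}
    (hT : ∀ r > 0, ∀ w, ContinuousAt (fun p : ℝ × W => T p.1 p.2) (r, w))
    (hf : Continuous f) (hu : ContinuousOn u (Ioc 0 τ)) :
    ContinuousOn (Function.uncurry (duhamelKernel T f u)) (Ioc 0 τ ×ˢ Ioo 0 1) := by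
  rintro ⟨t, σ⟩ ⟨ht, hσ⟩
  have hmaps : MapsTo (fun p : ℝ × ℝ => p.1 * p.2) (Ioc 0 τ ×ˢ Ioo 0 1) (Ioc 0 τ) :=
    fun p hp => mul_mem_Ioc_of_mem_Ioo hp.1 hp.2
  have hinner : ContinuousWithinAt (fun p : ℝ × ℝ => (p.1 * (1 - p.2), f (u (p.1 * p.2))))
      (Ioc 0 τ ×ˢ Ioo 0 1) (t, σ) :=
    (by fun_prop : Continuous fun p : ℝ × ℝ => p.1 * (1 - p.2)).continuousWithinAt.prodMk
      (hf.continuousAt.comp_continuousWithinAt ((hu _ (hmaps ⟨ht, hσ⟩)).comp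
        (f := fun p : ℝ × ℝ => p.1 * p.2) (continuous_fst.mul continuous_snd).continuousWithinAt
        hmaps))
  exact (hT _ (mul_pos ht.1 (sub_pos.2 hσ.2)) _).comp_continuousWithinAt_of_eq hinner rfl

theorem norm_duhamelKernel_le {M c ρ δ a κ t σ : ℝ} (hM : 0 ≤ M) (hc : 0 ≤ c) (hρ : 0 ≤ ρ)
    (hT : ∀ r > 0, ∀ w, ‖T r w‖ ≤ M * r ^ (δ - 1) * ‖w‖) (hf : ∀ v, ‖f v‖ ≤ c * ‖v‖ ^ ρ)
    (ht : 0 < t) (hσ : σ ∈ Ioo 0 1) (hu : (t * σ) ^ a * ‖u (t * σ)‖ ≤ κ) :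
    ‖duhamelKernel T f u t σ‖ ≤
      M * c * κ ^ ρ * t ^ (δ - 1 - a * ρ) * (σ ^ (-(a * ρ)) * (1 - σ) ^ (δ - 1)) := by
  have h1σ : 0 < 1 - σ := sub_pos.2 hσ.2
  have hfu : ‖f (u (t * σ))‖ ≤ c * (κ ^ ρ * (t * σ) ^ (-(a * ρ))) :=
    (hf _).trans (mul_le_mul_of_nonneg_left
      (rpow_le_mul_rpow_of_rpow_mul_le (mul_pos ht hσ.1) (norm_nonneg _) hρ hu) hc)
  calc ‖duhamelKernel T f u t σ‖ ≤ M * (t * (1 - σ)) ^ (δ - 1) * ‖f (u (t * σ))‖ :=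
        hT _ (mul_pos ht h1σ) _
    _ ≤ M * (t * (1 - σ)) ^ (δ - 1) * (c * (κ ^ ρ * (t * σ) ^ (-(a * ρ)))) := by gcongr
    _ = M * c * κ ^ ρ * t ^ (δ - 1 - a * ρ) * (σ ^ (-(a * ρ)) * (1 - σ) ^ (δ - 1)) := by
      rw [Real.mul_rpow ht.le h1σ.le, Real.mul_rpow ht.le hσ.1.le, sub_eq_add_neg (δ - 1),
        Real.rpow_add ht]
      ring

theorem tendsto_rpow_mul_norm_rescaledDuhamel {D a ρ q : ℝ} {β : ℝ → ℝ} (hρ : 0 < ρ)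
    (hβ : IntervalIntegrable β volume 0 1)
    (hK : ∀ κ, ∀ t > 0, ∀ σ ∈ Ioo 0 1, (t * σ) ^ a * ‖u (t * σ)‖ ≤ κ →
      ‖duhamelKernel T f u t σ‖ ≤ D * κ ^ ρ * t ^ (-q) * β σ)
    (hu : Tendsto (fun t => t ^ a * ‖u t‖) (𝓝[>] 0) (𝓝 0)) :
    Tendsto (fun t => t ^ q * ‖rescaledDuhamel T f u t‖) (𝓝[>] 0) (𝓝 0) := by
  refine tendsto_nhds_zero_of_forall_eventually_le_mul_rpow (D := D * ∫ σ in (0 : ℝ)..1, β σ) hρ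
    ?_ fun κ hκ => ?_
  · filter_upwards [self_mem_nhdsWithin] with t (ht : 0 < t)
    positivity
  filter_upwards [eventually_nhdsGT_forall_Ioc (hu.eventually (ge_mem_nhds hκ)),
    self_mem_nhdsWithin] with t hut (ht : 0 < t)
  have hnorm : ‖rescaledDuhamel T f u t‖ ≤ ∫ σ in (0 : ℝ)..1, D * κ ^ ρ * t ^ (-q) * β σ := by
    refine norm_integral_le_of_norm_le zero_le_one ?_ (hβ.const_mul _)
    filter_upwards [ae_mem_Ioo_of_mem_uIoc zero_le_one] with σ hσ hσ'
    have hσ := hσ (by rwa [uIoc_of_le zero_le_one])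
    exact hK κ t ht σ hσ (hut _ (mul_mem_Ioc_of_mem_Ioo ⟨ht, le_rfl⟩ hσ))
  calc t ^ q * ‖rescaledDuhamel T f u t‖
      ≤ t ^ q * ∫ σ in (0 : ℝ)..1, D * κ ^ ρ * t ^ (-q) * β σ := by gcongr
    _ = D * (∫ σ in (0 : ℝ)..1, β σ) * κ ^ ρ := by
      rw [intervalIntegral.integral_const_mul, Real.rpow_neg ht.le]
      field_simp

theorem map_smul_rescaledDuhamel [NormedSpace ℝ V] [CompleteSpace V] [CompleteSpace Vθ]
    {R : ℝ → W →L[ℝ] V} (j : Vθ →L[ℝ] V) (hjT : ∀ r > 0, ∀ w, j (T r w) = R r w) {t : ℝ}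
    (ht : 0 < t) (hint : IntervalIntegrable (duhamelKernel T f u t) volume 0 1) :
    j (t • rescaledDuhamel T f u t) = ∫ s in (0 : ℝ)..t, R (t - s) (f (u s)) := by
  have hR : ∫ σ in (0 : ℝ)..1, j (duhamelKernel T f u t σ) =
      ∫ σ in (0 : ℝ)..1, R (t - t * σ) (f (u (t * σ))) := by
    refine integral_congr_ae ?_
    filter_upwards [ae_mem_Ioo_of_mem_uIoc zero_le_one] with σ hσ hσ'
    rw [duhamelKernel, hjT _ (mul_pos ht (sub_pos.2 (hσ hσ').2)), mul_one_sub]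
  rw [map_smul, rescaledDuhamel, ← j.intervalIntegral_comp_comm hint, hR]
  simpa using smul_integral_comp_mul_left (a := 0) (b := 1) (fun s => R (t - s) (f (u s))) t

end Duhamel

theorem instantaneous_higher_regularity_general
    {V W : Type*} [NormedAddCommGroup V] [NormedSpace ℝ V] [CompleteSpace V]
    [NormedAddCommGroup W] [NormedSpace ℝ W]
    (ρ α ε M c : ℝ)
    (hρ : 1 < ρ) (hαρε : α * ρ * ε < 1)
    (hM : 0 < M) (hc : 0 < c)
    (R : ℝ → W →L[ℝ] V)
    (f : V → W) (hf0 : f 0 = 0)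
    (hf : ∀ x y : V, ‖f x - f y‖ ≤ c * (‖x‖ ^ (ρ - 1) + ‖y‖ ^ (ρ - 1)) * ‖x - y‖)
    {Vθ : Type*} [NormedAddCommGroup Vθ] [NormedSpace ℝ Vθ] [CompleteSpace Vθ]
    (jθ : Vθ →L[ℝ] V) (δ : ℝ) (hδ : 0 < δ)
    (Rθ : ℝ → W →L[ℝ] Vθ)
    (hRθcont : ∀ w : W, ContinuousOn (fun t => Rθ t w) (Ioi (0:ℝ)))
    (hjRθ : ∀ t > (0:ℝ), ∀ w : W, jθ (Rθ t w) = R t w)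
    (hRθbound : ∀ t > (0:ℝ), ∀ w : W, ‖Rθ t w‖ ≤ M * t ^ (δ - 1) * ‖w‖)
    (τ : ℝ)
    (gθ : ℝ → Vθ) (hgθ : ContinuousOn gθ (Ioc 0 τ))
    (u : ℝ → V) (hu : IsMildSolutionOn R f (fun t => jθ (gθ t)) u (Ioc 0 τ))
    (hubdd : ∃ C : ℝ, ∀ t ∈ Ioc (0:ℝ) τ, t ^ (α * ε) * ‖u t‖ ≤ C) :
    ∃ utilde : ℝ → Vθ,
      ContinuousOn utilde (Ioc 0 τ) ∧
      (∀ t ∈ Ioc (0:ℝ) τ, jθ (utilde t) = u t) ∧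
      (Tendsto (fun t => t ^ (α * ρ * ε - δ) * ‖gθ t‖) (𝓝[>] 0) (𝓝 0) →
        Tendsto (fun t => t ^ (α * ε) * ‖u t‖) (𝓝[>] 0) (𝓝 0) →
        Tendsto (fun t => t ^ (α * ρ * ε - δ) * ‖utilde t‖) (𝓝[>] 0) (𝓝 0)) := by
  obtain ⟨C, hC⟩ := hubdd
  set β : ℝ → ℝ := fun σ => σ ^ (-(α * ε * ρ)) * (1 - σ) ^ (δ - 1)
  have hβ : IntervalIntegrable β volume 0 1 :=
    intervalIntegrable_rpow_mul_one_sub_rpow (by linarith [mul_right_comm α ε ρ]) (by linarith)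
  have hRθjoint : ∀ r > 0, ∀ w, ContinuousAt (fun p : ℝ × W => Rθ p.1 p.2) (r, w) :=
    fun r hr w => continuousAt_apply_of_norm_apply_le ((hRθcont w).continuousAt (Ioi_mem_nhds hr))
      (continuousAt_const.mul (continuousAt_id.rpow_const (Or.inl hr.ne')))
      ((eventually_gt_nhds hr).mono fun t ht => hRθbound t ht)
  have hK : ∀ κ, ∀ t > 0, ∀ σ ∈ Ioo 0 1, (t * σ) ^ (α * ε) * ‖u (t * σ)‖ ≤ κ →
      ‖duhamelKernel Rθ f u t σ‖ ≤ M * c * κ ^ ρ * t ^ (δ - 1 - α * ε * ρ) * β σ :=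
    fun κ t ht σ hσ => norm_duhamelKernel_le hM.le hc.le (by linarith) hRθbound
      (norm_le_mul_rpow_of_norm_sub_le hρ hf0 hf) ht hσ
  have hKC : ∀ t ∈ Ioc 0 τ, ∀ σ ∈ Ioo 0 1,
      ‖duhamelKernel Rθ f u t σ‖ ≤ M * c * C ^ ρ * t ^ (δ - 1 - α * ε * ρ) * β σ :=
    fun t ht σ hσ => hK C t ht.1 σ hσ (hC _ (mul_mem_Ioc_of_mem_Ioo ht hσ))
  have hkernel := continuousOn_duhamelKernel hRθjoint (continuous_of_norm_sub_le hρ.le hf) hu.1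
  refine ⟨fun t => gθ t + t • rescaledDuhamel Rθ f u t, ?_, fun t ht => ?_, fun hg hu₀ => ?_⟩
  · refine hgθ.add (continuousOn_id.smul ?_)
    refine continuousOn_intervalIntegral_of_norm_le_mul zero_le_one hkernel ?_ hβ hKC
    exact continuousOn_const.mul (continuousOn_id.rpow_const fun t ht => Or.inl ht.1.ne')
  · have hint := intervalIntegrable_of_continuousOn_Ioo_of_norm_le zero_le_one
      (hkernel.comp (Continuous.prodMk_right t).continuousOn fun σ hσ => ⟨ht, hσ⟩)
      (hβ.const_mul _) (hKC t ht)
    rw [map_add, map_smul_rescaledDuhamel jθ hjRθ ht.1 hint, (hu.2 t ht).2]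
  · refine tendsto_rpow_mul_norm_add_smul hg (tendsto_rpow_mul_norm_rescaledDuhamel
      (D := M * c) (ρ := ρ) (by linarith) hβ (fun κ t ht σ hσ hκ => ?_) hu₀)
    rw [show -(α * ρ * ε - δ + 1) = δ - 1 - α * ε * ρ by ring]
    exact hK κ t ht σ hσ hκ

/-- **Instantaneous higher regularity (Theorem 1.1(A)).**
With `Vθ` playing the role of the stronger space `X^{1+θ}_q` (`θ = ρε - δ/α`, so
`αθ = αρε - δ`), `jθ : Vθ → V` the embedding and `Rθ(t)` the operator `R(t)` viewed with
values in `Vθ` and smoothing bound `M t^{δ-1}`: every mild solution `u` with forcing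
`g = jθ ∘ gθ` on `(0,τ]` with bounded weighted norm lifts to a continuous
`ũ : (0,τ] → Vθ` with `jθ (ũ t) = u t`; moreover, if `t^{αθ}‖gθ t‖ → 0` and
`t^{αε}‖u t‖ → 0` as `t → 0⁺`, then `t^{αθ}‖ũ t‖ → 0` as `t → 0⁺`. -/
theorem instantaneous_higher_regularity
    {V W : Type*} [NormedAddCommGroup V] [NormedSpace ℝ V] [CompleteSpace V]
    [NormedAddCommGroup W] [NormedSpace ℝ W] [CompleteSpace W]
    (ρ α ε M c B : ℝ)
    (hρ : 1 < ρ) (hα : 1 < α) (hε : 0 < ε) (hαρε : α * ρ * ε < 1)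
    (hM : 0 < M) (hc : 0 < c)
    (R : ℝ → W →L[ℝ] V)
    (hRcont : ∀ w : W, ContinuousOn (fun t => R t w) (Ioi (0:ℝ)))
    (hRbound : ∀ t > (0:ℝ), ∀ w : W, ‖R t w‖ ≤ M * t ^ (α * (ρ - 1) * ε - 1) * ‖w‖)
    (f : V → W) (hf0 : f 0 = 0)
    (hf : ∀ x y : V, ‖f x - f y‖ ≤ c * (‖x‖ ^ (ρ - 1) + ‖y‖ ^ (ρ - 1)) * ‖x - y‖)
    (hBint : IntervalIntegrable
      (fun s => (1 - s) ^ (α * (ρ - 1) * ε - 1) * s ^ (-(α * ρ * ε))) volume 0 1)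
    (hB : B = ∫ s in (0:ℝ)..1, (1 - s) ^ (α * (ρ - 1) * ε - 1) * s ^ (-(α * ρ * ε)))
    {Vθ : Type*} [NormedAddCommGroup Vθ] [NormedSpace ℝ Vθ] [CompleteSpace Vθ]
    (jθ : Vθ →L[ℝ] V) (δ : ℝ) (hδ : 0 < δ) (hδle : δ ≤ α * (ρ - 1) * ε)
    (Rθ : ℝ → W →L[ℝ] Vθ)
    (hRθcont : ∀ w : W, ContinuousOn (fun t => Rθ t w) (Ioi (0:ℝ)))
    (hjRθ : ∀ t > (0:ℝ), ∀ w : W, jθ (Rθ t w) = R t w)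
    (hRθbound : ∀ t > (0:ℝ), ∀ w : W, ‖Rθ t w‖ ≤ M * t ^ (δ - 1) * ‖w‖)
    (τ : ℝ) (hτ : 0 < τ)
    (gθ : ℝ → Vθ) (hgθ : ContinuousOn gθ (Ioc 0 τ))
    (u : ℝ → V) (hu : IsMildSolutionOn R f (fun t => jθ (gθ t)) u (Ioc 0 τ))
    (hubdd : ∃ C : ℝ, ∀ t ∈ Ioc (0:ℝ) τ, t ^ (α * ε) * ‖u t‖ ≤ C) :
    ∃ utilde : ℝ → Vθ,
      ContinuousOn utilde (Ioc 0 τ) ∧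
      (∀ t ∈ Ioc (0:ℝ) τ, jθ (utilde t) = u t) ∧
      (Tendsto (fun t => t ^ (α * ρ * ε - δ) * ‖gθ t‖) (𝓝[>] 0) (𝓝 0) →
        Tendsto (fun t => t ^ (α * ε) * ‖u t‖) (𝓝[>] 0) (𝓝 0) →
        Tendsto (fun t => t ^ (α * ρ * ε - δ) * ‖utilde t‖) (𝓝[>] 0) (𝓝 0)) :=
  instantaneous_higher_regularity_general ρ α ε M c hρ hαρε hM hc R f hf0 hf jθ δ hδ Rθ hRθcont hjRθ
    hRθbound τ gθ hgθ u hu hubdd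
end
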